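/- In a single cell with two flows having equal packet sizes and PHY rates but symbol error probabilities β₁ < β₂ (both in (0,1/2)), the proportional-fair optimal rate parameters satisfy x₁* < x₂*, i.e., the flow with the better channel gets a higher coding rate and hence strictly less airtime than the flow with the worse channel; in particular the proportional-fair allocation is not an equal-airtime allocation. -/

import Mathlib

/-- Kullback–Leibler divergence `D(B(x) ‖ B(β))` between Bernoulli distributions. -/
noncomputable def binKL (x β : ℝ) : ℝ :=
  x * Real.log (x / β) + (1 - x) * Real.log ((1 - x) / (1 - β))

/-- `Λ_f(x) = ln(x(1-x)/(β_f(1-β_f)))`. -/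
noncomputable def Lam (β x : ℝ) : ℝ := Real.log (x * (1 - x) / (β * (1 - β)))

/-!
Write `N_f(x) = k D(x‖β_f) / (1 - 2x)` and `M_f(x) = log ((λ + Λ_f(x)) / λ)`, so that `x_f*` solves
`N_f = M_f`. Both vanish at `x = β_f` and the ratio of their derivatives increases on `(β_f, 1/2)`,
so by the monotone l'Hôpital rule `N_f / M_f` is strictly increasing there.

Suppose `x₂* ≤ x₁*` and compare the two flows at `x = x₁*`. As a function of `β`, `D(x‖β) / Λ_β(x)`
decreases (monotone l'Hôpital rule again, both terms vanishing at `β = x`); `Λ_{β₂}(x) < Λ_{β₁}(x)`;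
and `log (1 + L/λ) / L` decreases in `L` by concavity of `log`. Together,
`N₂(x₁*) / M₂(x₁*) < N₁(x₁*) / M₁(x₁*) = 1 = N₂(x₂*) / M₂(x₂*)`, against the monotonicity of
`N₂ / M₂`.
-/

open Real Set

lemma StrictMonoOn.mul {α M₀ : Type*} [MonoidWithZero M₀] [PartialOrder M₀]
    [PosMulStrictMono M₀] [MulPosStrictMono M₀] [Preorder α] {f g : α → M₀} {s : Set α}
    (hf : StrictMonoOn f s) (hg : StrictMonoOn g s) (hf₀ : ∀ x ∈ s, 0 ≤ f x)
    (hg₀ : ∀ x ∈ s, 0 ≤ g x) : StrictMonoOn (fun x => f x * g x) s :=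
  fun _ ha _ hb h ↦ mul_lt_mul'' (hf ha hb h) (hg ha hb h) (hf₀ _ ha) (hg₀ _ ha)

/-- Monotone l'Hôpital rule. By Cauchy's mean value theorem on `[a, p]` and `[p, q]`, both
`f p / g p` and `(f q - f p) / (g q - g p)` are values of `f' / g'`, at points `η < p < ξ`, and
`f q / g q` is a proper weighted mean of the two. -/
theorem strictMonoOn_div_of_strictMonoOn_deriv_div {f g f' g' : ℝ → ℝ} {a b : ℝ}
    (hfc : ContinuousOn f (Ico a b)) (hgc : ContinuousOn g (Ico a b))
    (hf : ∀ x ∈ Ioo a b, HasDerivAt f (f' x) x) (hg : ∀ x ∈ Ioo a b, HasDerivAt g (g' x) x)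
    (hfa : f a = 0) (hga : g a = 0) (hg' : ∀ x ∈ Ioo a b, 0 < g' x)
    (hmono : StrictMonoOn (fun x => f' x / g' x) (Ioo a b)) :
    StrictMonoOn (fun x => f x / g x) (Ioo a b) := by
  intro p hp q hq hpq
  have hg_mono : StrictMonoOn g (Ico a b) := by
    refine strictMonoOn_of_hasDerivWithinAt_pos (f' := g') (convex_Ico a b) hgc
      (fun x hx => ?_) (fun x hx => ?_) <;> rw [interior_Ico] at hx
    exacts [(hg x hx).hasDerivWithinAt, hg' x hx]
  have hp' : p ∈ Ico a b := Ioo_subset_Ico_self hp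
  have hq' : q ∈ Ico a b := Ioo_subset_Ico_self hq
  have hgp : 0 < g p := hga ▸ hg_mono (left_mem_Ico.2 (hp.1.trans hp.2)) hp' hp.1
  have hgpq : g p < g q := hg_mono hp' hq' hpq
  obtain ⟨η, hη, hη_eq⟩ := exists_ratio_hasDerivAt_eq_ratio_slope f f' hp.1
    (hfc.mono (Icc_subset_Ico_right hp.2)) (fun x hx => hf x ⟨hx.1, hx.2.trans hp.2⟩) g g'
    (hgc.mono (Icc_subset_Ico_right hp.2)) (fun x hx => hg x ⟨hx.1, hx.2.trans hp.2⟩)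
  obtain ⟨ξ, hξ, hξ_eq⟩ := exists_ratio_hasDerivAt_eq_ratio_slope f f' hpq
    (hfc.mono (Icc_subset_Ico hp.1.le hq.2)) (fun x hx => hf x ⟨hp.1.trans hx.1, hx.2.trans hq.2⟩)
    g g' (hgc.mono (Icc_subset_Ico hp.1.le hq.2))
    (fun x hx => hg x ⟨hp.1.trans hx.1, hx.2.trans hq.2⟩)
  have hηI : η ∈ Ioo a b := ⟨hη.1, hη.2.trans hp.2⟩
  have hξI : ξ ∈ Ioo a b := ⟨hp.1.trans hξ.1, hξ.2.trans hq.2⟩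
  have hgη := hg' η hηI
  have hgξ := hg' ξ hξI
  have hfp : f p = g p * (f' η / g' η) := by
    rw [hfa, hga, sub_zero, sub_zero] at hη_eq
    field_simp; linarith
  have hfq : f q = f p + (g q - g p) * (f' ξ / g' ξ) := by
    field_simp; linarith
  have hηξ : f' η / g' η < f' ξ / g' ξ := hmono hηI hξI (hη.2.trans hξ.1)
  show f p / g p < f q / g q
  rw [div_lt_div_iff₀ hgp (hgp.trans hgpq), hfq, hfp]
  nlinarith [mul_pos (mul_pos hgp (sub_pos.2 hgpq)) (sub_pos.2 hηξ)]

theorem strictAntiOn_div_of_strictAntiOn_deriv_div {f g f' g' : ℝ → ℝ} {a b : ℝ}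
    (hfc : ContinuousOn f (Ioc a b)) (hgc : ContinuousOn g (Ioc a b))
    (hf : ∀ x ∈ Ioo a b, HasDerivAt f (f' x) x) (hg : ∀ x ∈ Ioo a b, HasDerivAt g (g' x) x)
    (hfb : f b = 0) (hgb : g b = 0) (hg' : ∀ x ∈ Ioo a b, g' x < 0)
    (hanti : StrictAntiOn (fun x => f' x / g' x) (Ioo a b)) :
    StrictAntiOn (fun x => f x / g x) (Ioo a b) := by
  have hneg {x : ℝ} (hx : x ∈ Ioo (-b) (-a)) : -x ∈ Ioo a b :=
    ⟨lt_neg_of_lt_neg hx.2, neg_lt_of_neg_lt hx.1⟩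
  have hcont {u : ℝ → ℝ} (hu : ContinuousOn u (Ioc a b)) :
      ContinuousOn (fun x => u (-x)) (Ico (-b) (-a)) :=
    hu.comp continuous_neg.continuousOn fun x hx => ⟨lt_neg_of_lt_neg hx.2, neg_le.1 hx.1⟩
  have hderiv {u u' : ℝ → ℝ} (hu : ∀ x ∈ Ioo a b, HasDerivAt u (u' x) x) (x : ℝ)
      (hx : x ∈ Ioo (-b) (-a)) : HasDerivAt (fun x => u (-x)) (-u' (-x)) x := by
    have h := (hu (-x) (hneg hx)).comp x (hasDerivAt_neg x)
    rwa [mul_neg_one] at h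
  have key := strictMonoOn_div_of_strictMonoOn_deriv_div (hcont hfc) (hcont hgc) (hderiv hf)
    (hderiv hg) (by simpa using hfb) (by simpa using hgb)
    (fun x hx => neg_pos.2 (hg' _ (hneg hx)))
    (fun x hx y hy hxy => by
      simpa only [neg_div_neg_eq] using hanti (hneg hy) (hneg hx) (neg_lt_neg hxy))
  intro x hx y hy hxy
  have hx' : -x ∈ Ioo (-b) (-a) := ⟨neg_lt_neg hx.2, neg_lt_neg hx.1⟩
  have hy' : -y ∈ Ioo (-b) (-a) := ⟨neg_lt_neg hy.2, neg_lt_neg hy.1⟩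
  simpa using key hy' hx' (neg_lt_neg hxy)

lemma sub_le_mul_log_div {x y : ℝ} (hx : 0 < x) (hy : 0 < y) : x - y ≤ x * log (x / y) := by
  have h := log_le_sub_one_of_pos (div_pos hy hx)
  rw [log_div hy.ne' hx.ne'] at h
  rw [log_div hx.ne' hy.ne']
  have hxy : x * (y / x - 1) = y - x := by field_simp
  nlinarith

lemma log_add_div_self_pos {lam L : ℝ} (hlam : 0 < lam) (hL : 0 < L) :
    0 < log ((lam + L) / lam) :=
  log_pos ((one_lt_div hlam).2 (by linarith))

lemma log_add_div_self_div_strictAntiOn {lam : ℝ} (hlam : 0 < lam) :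
    StrictAntiOn (fun L => log ((lam + L) / lam) / L) (Ioi 0) := by
  intro s hs t ht hst
  have hs' : 0 < lam + s := by linarith [mem_Ioi.1 hs]
  have ht' : 0 < lam + t := by linarith [mem_Ioi.1 ht]
  have h := strictConcaveOn_log_Ioi.secant_strict_mono (mem_Ioi.2 hlam) (mem_Ioi.2 hs')
    (mem_Ioi.2 ht') (by linarith [mem_Ioi.1 hs]) (by linarith [mem_Ioi.1 ht])
    (by linarith)
  simpa only [log_div hs'.ne' hlam.ne', log_div ht'.ne' hlam.ne', add_sub_cancel_left] using h

lemma log_div_sub_log_div_strictMonoOn {β : ℝ} (hβ₀ : 0 < β) (hβ₁ : β < 1) :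
    StrictMonoOn (fun x => log (x / β) - log ((1 - x) / (1 - β))) (Ioo 0 1) := by
  intro s hs t ht hst
  have h₀ : log (s / β) < log (t / β) :=
    log_lt_log (div_pos hs.1 hβ₀) (div_lt_div_of_pos_right hst hβ₀)
  have h₁ : log ((1 - t) / (1 - β)) < log ((1 - s) / (1 - β)) :=
    log_lt_log (div_pos (sub_pos.2 ht.2) (sub_pos.2 hβ₁))
      (div_lt_div_of_pos_right (by linarith) (sub_pos.2 hβ₁))
  dsimp only
  linarith

lemma log_div_sub_log_div_nonneg {β x : ℝ} (hβ₀ : 0 < β) (hβx : β ≤ x) (hx : x < 1) :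
    0 ≤ log (x / β) - log ((1 - x) / (1 - β)) := by
  have h₀ : 0 ≤ log (x / β) := log_nonneg ((one_le_div hβ₀).2 hβx)
  have h₁ : log ((1 - x) / (1 - β)) ≤ 0 :=
    log_nonpos (div_nonneg (by linarith) (by linarith)) ((div_le_one (by linarith)).2 (by linarith))
  linarith

lemma binKL_self (β : ℝ) : binKL β β = 0 := by
  simp [binKL]

lemma binKL_nonneg {x β : ℝ} (hx₀ : 0 < x) (hx₁ : x < 1) (hβ₀ : 0 < β) (hβ₁ : β < 1) :
    0 ≤ binKL x β := by
  have h₀ := sub_le_mul_log_div hx₀ hβ₀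
  have h₁ := sub_le_mul_log_div (sub_pos.2 hx₁) (sub_pos.2 hβ₁)
  unfold binKL
  linarith

lemma hasDerivAt_binKL_left {x β : ℝ} (hx₀ : x ≠ 0) (hx₁ : x ≠ 1) (hβ₀ : β ≠ 0) (hβ₁ : β ≠ 1) :
    HasDerivAt (binKL · β) (log (x / β) - log ((1 - x) / (1 - β))) x := by
  have hx₁' : 1 - x ≠ 0 := sub_ne_zero.2 hx₁.symm
  have hβ₁' : 1 - β ≠ 0 := sub_ne_zero.2 hβ₁.symm
  have h := ((hasDerivAt_id' x).fun_mul (((hasDerivAt_id' x).div_const β).log (by simp [*]))).add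
    (((hasDerivAt_id' x).const_sub 1).mul
      ((((hasDerivAt_id' x).const_sub 1).div_const (1 - β)).log (by simp [*])))
  refine h.congr_deriv ?_
  field_simp
  ring

lemma hasDerivAt_binKL_right {x β : ℝ} (hx₀ : x ≠ 0) (hx₁ : x ≠ 1) (hβ₀ : β ≠ 0) (hβ₁ : β ≠ 1) :
    HasDerivAt (binKL x ·) ((β - x) / (β * (1 - β))) β := by
  have hx₁' : 1 - x ≠ 0 := sub_ne_zero.2 hx₁.symm
  have hβ₁' : 1 - β ≠ 0 := sub_ne_zero.2 hβ₁.symm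
  have h := ((((hasDerivAt_const β x).fun_div (hasDerivAt_id' β) hβ₀).log (by simp [*])).const_mul
    x).add (((((hasDerivAt_const β (1 - x)).fun_div ((hasDerivAt_id' β).const_sub 1) hβ₁').log
      (by simp [*])).const_mul (1 - x)))
  refine h.congr_deriv ?_
  field_simp
  ring

lemma Lam_self (β : ℝ) : Lam β β = 0 :=
  log_div_self _

lemma Lam_swap (β x : ℝ) : Lam x β = -Lam β x := by
  rw [Lam, Lam, ← log_inv, inv_div]

lemma Lam_strictMonoOn {β : ℝ} (hβ₀ : 0 < β) (hβ₁ : β < 1) :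
    StrictMonoOn (Lam β) (Ioc 0 (1 / 2)) := by
  intro s hs t ht hst
  have hβ : 0 < β * (1 - β) := mul_pos hβ₀ (sub_pos.2 hβ₁)
  have hs' : 0 < s * (1 - s) := mul_pos hs.1 (by linarith [hs.2])
  exact log_lt_log (div_pos hs' hβ) (div_lt_div_of_pos_right (by nlinarith [ht.2]) hβ)

lemma Lam_pos {β x : ℝ} (hβ₀ : 0 < β) (hβx : β < x) (hx : x ≤ 1 / 2) : 0 < Lam β x :=
  Lam_self β ▸ Lam_strictMonoOn hβ₀ (by linarith) ⟨hβ₀, by linarith⟩ ⟨hβ₀.trans hβx, hx⟩ hβx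

lemma Lam_nonneg {β x : ℝ} (hβ₀ : 0 < β) (hβx : β ≤ x) (hx : x ≤ 1 / 2) : 0 ≤ Lam β x :=
  Lam_self β ▸ (Lam_strictMonoOn hβ₀ (by linarith)).monotoneOn ⟨hβ₀, by linarith⟩
    ⟨hβ₀.trans_le hβx, hx⟩ hβx

lemma hasDerivAt_Lam_right {x β : ℝ} (hx₀ : x ≠ 0) (hx₁ : x ≠ 1) (hβ₀ : β ≠ 0) (hβ₁ : β ≠ 1) :
    HasDerivAt (Lam β ·) ((1 - 2 * x) / (x * (1 - x))) x := by
  have hx₁' : 1 - x ≠ 0 := sub_ne_zero.2 hx₁.symm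
  have hβ₁' : 1 - β ≠ 0 := sub_ne_zero.2 hβ₁.symm
  have h := (((hasDerivAt_id' x).fun_mul ((hasDerivAt_id' x).const_sub 1)).div_const
    (β * (1 - β))).log (by simp [*])
  refine h.congr_deriv ?_
  field_simp
  ring

lemma hasDerivAt_Lam_left {x β : ℝ} (hx₀ : x ≠ 0) (hx₁ : x ≠ 1) (hβ₀ : β ≠ 0) (hβ₁ : β ≠ 1) :
    HasDerivAt (Lam · x) (-(1 - 2 * β) / (β * (1 - β))) β := by
  have hx₁' : 1 - x ≠ 0 := sub_ne_zero.2 hx₁.symm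
  have hβ₁' : 1 - β ≠ 0 := sub_ne_zero.2 hβ₁.symm
  have h := ((hasDerivAt_const β (x * (1 - x))).fun_div
    ((hasDerivAt_id' β).fun_mul ((hasDerivAt_id' β).const_sub 1)) (by simp [*])).log (by simp [*])
  refine h.congr_deriv ?_
  field_simp
  ring

lemma hasDerivAt_log_add_Lam_div {β lam x : ℝ} (hx₀ : x ≠ 0) (hx₁ : x ≠ 1) (hβ₀ : β ≠ 0)
    (hβ₁ : β ≠ 1) (hlam : lam ≠ 0) (hΛ : lam + Lam β x ≠ 0) :
    HasDerivAt (fun x => log ((lam + Lam β x) / lam))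
      ((1 - 2 * x) / (x * (1 - x) * (lam + Lam β x))) x := by
  refine ((((hasDerivAt_Lam_right hx₀ hx₁ hβ₀ hβ₁).const_add lam).div_const lam).log
    (div_ne_zero hΛ hlam)).congr_deriv ?_
  field_simp

lemma binKL_div_Lam_strictAntiOn {x : ℝ} (hx₀ : 0 < x) (hx : x < 1 / 2) :
    StrictAntiOn (fun β => binKL x β / Lam β x) (Ioo 0 x) := by
  have hx₁ : x ≠ 1 := by linarith
  have hne {β : ℝ} (hβ : β ∈ Ioc 0 x) : β ≠ 0 ∧ β ≠ 1 := ⟨hβ.1.ne', by linarith [hβ.2]⟩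
  have hD {β : ℝ} (hβ : β ∈ Ioc 0 x) := hasDerivAt_binKL_right hx₀.ne' hx₁ (hne hβ).1 (hne hβ).2
  have hΛ {β : ℝ} (hβ : β ∈ Ioc 0 x) := hasDerivAt_Lam_left hx₀.ne' hx₁ (hne hβ).1 (hne hβ).2
  refine strictAntiOn_div_of_strictAntiOn_deriv_div
    (fun β hβ => (hD hβ).continuousAt.continuousWithinAt)
    (fun β hβ => (hΛ hβ).continuousAt.continuousWithinAt)
    (fun β hβ => hD (Ioo_subset_Ioc_self hβ)) (fun β hβ => hΛ (Ioo_subset_Ioc_self hβ))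
    (binKL_self x) (Lam_self x) (fun β hβ => ?_) ?_
  · exact div_neg_of_neg_of_pos (by linarith [hβ.2]) (mul_pos hβ.1 (by linarith [hβ.2]))
  · refine StrictAntiOn.congr (f₁ := fun β => (x - β) / (1 - 2 * β)) ?_ fun β hβ => ?_
    · intro s hs t ht hst
      rw [div_lt_div_iff₀ (by linarith [ht.2]) (by linarith [hs.2])]
      nlinarith
    · have : 1 - β ≠ 0 := by linarith [hβ.2]
      have : 1 - 2 * β ≠ 0 := by linarith [hβ.2]
      field_simp [hβ.1.ne']
      ring

lemma binKL_mul_log_lt_binKL_mul_log {β₁ β₂ x lam : ℝ} (hβ₁ : 0 < β₁) (hβ : β₁ < β₂)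
    (hβ₂x : β₂ < x) (hx : x < 1 / 2) (hlam : 0 < lam) :
    binKL x β₂ * log ((lam + Lam β₁ x) / lam) < binKL x β₁ * log ((lam + Lam β₂ x) / lam) := by
  have hβ₂ : 0 < β₂ := hβ₁.trans hβ
  have hx₀ : 0 < x := hβ₂.trans hβ₂x
  have hΛ₁ : 0 < Lam β₁ x := Lam_pos hβ₁ (hβ.trans hβ₂x) hx.le
  have hΛ₂ : 0 < Lam β₂ x := Lam_pos hβ₂ hβ₂x hx.le
  have hΛ : Lam β₂ x < Lam β₁ x := by
    have h := Lam_strictMonoOn hx₀ (by linarith) ⟨hβ₁, by linarith⟩ ⟨hβ₂, by linarith⟩ hβ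
    rwa [Lam_swap β₁ x, Lam_swap β₂ x, neg_lt_neg_iff] at h
  have hD : binKL x β₂ / Lam β₂ x < binKL x β₁ / Lam β₁ x :=
    binKL_div_Lam_strictAntiOn hx₀ hx ⟨hβ₁, hβ.trans hβ₂x⟩ ⟨hβ₂, hβ₂x⟩ hβ
  have hG : log ((lam + Lam β₁ x) / lam) / Lam β₁ x < log ((lam + Lam β₂ x) / lam) / Lam β₂ x :=
    log_add_div_self_div_strictAntiOn hlam hΛ₂ hΛ₁ hΛ
  have hD₂ : 0 ≤ binKL x β₂ / Lam β₂ x :=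
    div_nonneg (binKL_nonneg hx₀ (by linarith) hβ₂ (by linarith)) hΛ₂.le
  have hG₁ : 0 ≤ log ((lam + Lam β₁ x) / lam) / Lam β₁ x :=
    div_nonneg (log_add_div_self_pos hlam hΛ₁).le hΛ₁.le
  calc binKL x β₂ * log ((lam + Lam β₁ x) / lam)
      = binKL x β₂ / Lam β₂ x * (log ((lam + Lam β₁ x) / lam) / Lam β₁ x) *
          (Lam β₁ x * Lam β₂ x) := by field_simp
    _ < binKL x β₁ / Lam β₁ x * (log ((lam + Lam β₂ x) / lam) / Lam β₂ x) *
          (Lam β₁ x * Lam β₂ x) :=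
            mul_lt_mul_of_pos_right (mul_lt_mul'' hD hG hD₂ hG₁) (mul_pos hΛ₁ hΛ₂)
    _ = binKL x β₁ * log ((lam + Lam β₂ x) / lam) := by field_simp

/-- The function here is the ratio of the `x`-derivatives of `binKL x β` and
`log ((lam + Lam β x) / lam)`. -/
lemma log_div_sub_log_div_mul_strictMonoOn {β lam : ℝ} (hβ₀ : 0 < β) (hβ : β < 1 / 2)
    (hlam : 0 < lam) :
    StrictMonoOn (fun x => (log (x / β) - log ((1 - x) / (1 - β))) * (lam + Lam β x) *
      (x * (1 - x) / (1 - 2 * x))) (Ioo β (1 / 2)) := by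
  have hℓ := (log_div_sub_log_div_strictMonoOn hβ₀ (by linarith)).mono
    fun x (hx : x ∈ Ioo β (1 / 2)) => (⟨hβ₀.trans hx.1, by linarith [hx.2]⟩ : x ∈ Ioo 0 1)
  have hℓ₀ (x : ℝ) (hx : x ∈ Ioo β (1 / 2)) := log_div_sub_log_div_nonneg hβ₀ hx.1.le
    (by linarith [hx.2])
  have hL : StrictMonoOn (fun x => lam + Lam β x) (Ioo β (1 / 2)) := fun s hs t ht hst =>
    add_lt_add_right (Lam_strictMonoOn hβ₀ (by linarith) ⟨hβ₀.trans hs.1, hs.2.le⟩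
      ⟨hβ₀.trans ht.1, ht.2.le⟩ hst) lam
  have hL₀ (x : ℝ) (hx : x ∈ Ioo β (1 / 2)) : 0 ≤ lam + Lam β x := by
    linarith [Lam_nonneg hβ₀ hx.1.le hx.2.le]
  have hq : StrictMonoOn (fun x => x * (1 - x) / (1 - 2 * x)) (Ioo β (1 / 2)) := by
    intro s hs t ht hst
    have := hβ₀.trans hs.1
    rw [div_lt_div_iff₀ (by linarith [hs.2]) (by linarith [ht.2])]
    nlinarith [ht.2, mul_pos this (sub_pos.2 hst)]
  have hq₀ (x : ℝ) (hx : x ∈ Ioo β (1 / 2)) : 0 ≤ x * (1 - x) / (1 - 2 * x) :=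
    div_nonneg (mul_nonneg (hβ₀.trans hx.1).le (by linarith [hx.2])) (by linarith [hx.2])
  exact (hℓ.mul hL hℓ₀ hL₀).mul hq (fun x hx => mul_nonneg (hℓ₀ x hx) (hL₀ x hx)) hq₀

lemma binKL_div_log_strictMonoOn {β lam : ℝ} (hβ₀ : 0 < β) (hβ : β < 1 / 2) (hlam : 0 < lam) :
    StrictMonoOn (fun x => binKL x β / log ((lam + Lam β x) / lam)) (Ioo β (1 / 2)) := by
  have hΛ {x : ℝ} (hx : x ∈ Ico β (1 / 2)) : 0 < lam + Lam β x := by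
    linarith [Lam_nonneg hβ₀ hx.1 hx.2.le]
  have hne {x : ℝ} (hx : x ∈ Ico β (1 / 2)) : x ≠ 0 ∧ x ≠ 1 :=
    ⟨(hβ₀.trans_le hx.1).ne', by linarith [hx.2]⟩
  have hD {x : ℝ} (hx : x ∈ Ico β (1 / 2)) :=
    hasDerivAt_binKL_left (hne hx).1 (hne hx).2 hβ₀.ne' (by linarith : β ≠ 1)
  have hG {x : ℝ} (hx : x ∈ Ico β (1 / 2)) := hasDerivAt_log_add_Lam_div (lam := lam)
    (hne hx).1 (hne hx).2 hβ₀.ne' (by linarith : β ≠ 1) hlam.ne' (hΛ hx).ne'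
  refine strictMonoOn_div_of_strictMonoOn_deriv_div
    (fun x hx => (hD hx).continuousAt.continuousWithinAt)
    (fun x hx => (hG hx).continuousAt.continuousWithinAt)
    (fun x hx => hD (Ioo_subset_Ico_self hx)) (fun x hx => hG (Ioo_subset_Ico_self hx))
    (binKL_self β) (by simp [Lam_self]) (fun x hx => ?_)
    ((log_div_sub_log_div_mul_strictMonoOn hβ₀ hβ hlam).congr fun x hx => ?_)
  all_goals
    have := hΛ (Ioo_subset_Ico_self hx)
    have := hβ₀.trans hx.1
    have : 0 < 1 - x := by linarith [hx.2]
    have : 0 < 1 - 2 * x := by linarith [hx.2]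
  · positivity
  · field_simp

lemma div_one_sub_two_mul_mul_binKL_div_log_strictMonoOn {β k lam : ℝ} (hβ₀ : 0 < β)
    (hβ : β < 1 / 2) (hk : 0 < k) (hlam : 0 < lam) :
    StrictMonoOn (fun x => k / (1 - 2 * x) * binKL x β / log ((lam + Lam β x) / lam))
      (Ioo β (1 / 2)) := by
  have hk' : StrictMonoOn (fun x => k / (1 - 2 * x)) (Ioo β (1 / 2)) := fun s hs t ht hst =>
    div_lt_div_of_pos_left hk (by linarith [ht.2]) (by linarith)
  refine (hk'.mul (binKL_div_log_strictMonoOn hβ₀ hβ hlam) (fun x hx => ?_) fun x hx => ?_).congr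
    fun x _ => (mul_div_assoc _ _ _).symm
  · exact div_nonneg hk.le (by linarith [hx.2])
  · exact div_nonneg (binKL_nonneg (hβ₀.trans hx.1) (by linarith [hx.2]) hβ₀ (by linarith))
      (log_add_div_self_pos hlam (Lam_pos hβ₀ hx.1 hx.2.le)).le

/-- In a single cell with two flows having equal packet sizes `k` and PHY rates `w` but
symbol error probabilities `β₁ < β₂` (both in `(0,1/2)`), the proportional-fair optimal
rate parameters — the solutions `x_f* ∈ (β_f, 1/2)` of
`(k/(1-2x)) D(B(x)‖B(β_f)) = ln((λ + Λ_f(x))/λ)` with a common `λ > 0` — satisfy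
`x₁* < x₂*`: the flow with the better channel gets a higher coding rate
(`1 - 2x₂* < 1 - 2x₁*`) and strictly less airtime
(`k/((1-2x₁*)w) < k/((1-2x₂*)w)`) than the flow with the worse channel; in particular the
proportional-fair allocation is not an equal-airtime allocation. -/
theorem better_channel_gets_less_airtime (β₁ β₂ k lam w x₁ x₂ : ℝ)
    (hβ₁0 : 0 < β₁) (hβ : β₁ < β₂) (hβ₂ : β₂ < 1 / 2)
    (hk : 0 < k) (hlam : 0 < lam) (hw : 0 < w)
    (hx₁ : x₁ ∈ Set.Ioo β₁ (1 / 2))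
    (hx₂ : x₂ ∈ Set.Ioo β₂ (1 / 2))
    (heq₁ : k / (1 - 2 * x₁) * binKL x₁ β₁ = Real.log ((lam + Lam β₁ x₁) / lam))
    (heq₂ : k / (1 - 2 * x₂) * binKL x₂ β₂ = Real.log ((lam + Lam β₂ x₂) / lam)) :
    x₁ < x₂ ∧ 1 - 2 * x₂ < 1 - 2 * x₁ ∧
      k / ((1 - 2 * x₁) * w) < k / ((1 - 2 * x₂) * w) := by
  have hβ₂0 : 0 < β₂ := hβ₁0.trans hβ
  have hx₁₂ : x₁ < x₂ := by
    by_contra! hle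
    have hx₁' : x₁ ∈ Ioo β₂ (1 / 2) := ⟨hx₂.1.trans_le hle, hx₁.2⟩
    have hG₁ := log_add_div_self_pos hlam (Lam_pos hβ₁0 hx₁.1 hx₁.2.le)
    have hG₂ := log_add_div_self_pos hlam (Lam_pos hβ₂0 hx₁'.1 hx₁'.2.le)
    have h_at_x₁ : k / (1 - 2 * x₁) * binKL x₁ β₂ / log ((lam + Lam β₂ x₁) / lam) < 1 := by
      have h := mul_lt_mul_of_pos_left
        (binKL_mul_log_lt_binKL_mul_log hβ₁0 hβ hx₁'.1 hx₁.2 hlam)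
        (div_pos hk (by linarith [hx₁.2]) : 0 < k / (1 - 2 * x₁))
      rw [← mul_assoc, ← mul_assoc, heq₁] at h
      rw [div_lt_one hG₂, ← mul_lt_mul_iff_of_pos_right hG₁]
      linarith
    have h_at_x₂ : k / (1 - 2 * x₂) * binKL x₂ β₂ / log ((lam + Lam β₂ x₂) / lam) = 1 := by
      rw [heq₂, div_self (log_add_div_self_pos hlam (Lam_pos hβ₂0 hx₂.1 hx₂.2.le)).ne']
    have := (div_one_sub_two_mul_mul_binKL_div_log_strictMonoOn hβ₂0 hβ₂ hk hlam).monotoneOn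
      hx₂ hx₁' hle
    linarith
  refine ⟨hx₁₂, by linarith, div_lt_div_of_pos_left hk (mul_pos (by linarith [hx₂.2]) hw) ?_⟩
  exact mul_lt_mul_of_pos_right (by linarith) hw
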